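/- Let S ⊆ ℝ be a set of Lebesgue measure zero, a ∈ ℝ, and let g : [0,1] → ℝ be continuous with g(s) − s·a ∈ S for every s ∈ [0,1]. Then g(1) = g(0) + a. -/

import Mathlib

/-!
The function `s ↦ g s - s * a` is continuous on `[0, 1]` with values in the null set `S`, so its
image is an interval of measure zero, i.e. a single point; comparing its values at `0` and `1`
gives the claim.
-/

open MeasureTheory

theorem IsPreconnected.subsingleton_of_volume_eq_zero {s : Set ℝ} (hs : IsPreconnected s)
    (hs0 : volume s = 0) : s.Subsingleton := by
  intro x hx y hy
  by_contra hxy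
  wlog hlt : x < y generalizing x y
  · exact this hy hx (Ne.symm hxy) ((Ne.symm hxy).lt_of_le (not_lt.mp hlt))
  have hIcc : volume (Set.Icc x y) = 0 := measure_mono_null (hs.Icc_subset hx hy) hs0
  rw [Real.volume_Icc, ENNReal.ofReal_eq_zero] at hIcc
  linarith

theorem stmt_1 (S : Set ℝ) (hS : volume S = 0) (a : ℝ) (g : ℝ → ℝ)
    (hg : ContinuousOn g (Set.Icc 0 1))
    (hmem : ∀ s ∈ Set.Icc (0:ℝ) 1, g s - s * a ∈ S) :
    g 1 = g 0 + a := by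
  set h : ℝ → ℝ := fun s => g s - s * a
  have hcont : ContinuousOn h (Set.Icc 0 1) := hg.sub (continuousOn_id.mul continuousOn_const)
  have himage : (h '' Set.Icc 0 1).Subsingleton :=
    (isPreconnected_Icc.image h hcont).subsingleton_of_volume_eq_zero
      (measure_mono_null (Set.image_subset_iff.mpr hmem) hS)
  have h01 : h 0 = h 1 :=
    himage (Set.mem_image_of_mem h (by norm_num)) (Set.mem_image_of_mem h (by norm_num))
  simp only [h] at h01
  linarith
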